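/- A separable bipartite density matrix has positive semidefinite partial transpose: if ρ = Σ_k p_k σ_k ⊗ τ_k with p_k ≥ 0, Σ p_k = 1, and σ_k, τ_k density matrices, then ρ^{Γ_B} = Σ_k p_k σ_k ⊗ τ_k^T is positive semidefinite. -/

import Mathlib

open Matrix Kronecker
open scoped BigOperators Classical ComplexOrder

noncomputable section

def grho {V : Type*} [Fintype V] [DecidableEq V] (G : SimpleGraph V) : Matrix V V ℂ :=
  ((2 * G.edgeFinset.card : ℂ))⁻¹ • G.lapMatrix ℂ

def degM {V : Type*} [Fintype V] [DecidableEq V] (G : SimpleGraph V) : Matrix V V ℂ :=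
  Matrix.diagonal fun v => (G.degree v : ℂ)

def ptB {p q : ℕ} {α : Type*} (A : Matrix (Fin p × Fin q) (Fin p × Fin q) α) :
    Matrix (Fin p × Fin q) (Fin p × Fin q) α :=
  fun x y => A (x.1, y.2) (y.1, x.2)

def gptB {p q : ℕ} (G : SimpleGraph (Fin p × Fin q)) : SimpleGraph (Fin p × Fin q) where
  Adj x y := G.Adj (x.1, y.2) (y.1, x.2)
  symm := ⟨fun x y h => G.symm.symm _ _ h⟩
  loopless := ⟨fun x h => G.loopless.irrefl x h⟩

def IsDensityMatrix {n : Type*} [Fintype n] [DecidableEq n] (A : Matrix n n ℂ) : Prop :=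
  A.PosSemidef ∧ A.trace = 1

def Separable {p q : ℕ} (ρ : Matrix (Fin p × Fin q) (Fin p × Fin q) ℂ) : Prop :=
  ∃ (m : ℕ) (w : Fin m → ℝ) (σ : Fin m → Matrix (Fin p) (Fin p) ℂ)
    (τ : Fin m → Matrix (Fin q) (Fin q) ℂ),
    (∀ k, 0 ≤ w k) ∧ (∑ k, w k = 1) ∧
    (∀ k, IsDensityMatrix (σ k)) ∧ (∀ k, IsDensityMatrix (τ k)) ∧
    ρ = ∑ k, (w k : ℂ) • (σ k ⊗ₖ τ k)

def proj {n : Type*} (ψ : n → ℂ) : Matrix n n ℂ := vecMulVec ψ (star ψ)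

section PartialTranspose

variable {p q : ℕ} {α : Type*}

theorem ptB_kronecker [Mul α] (A : Matrix (Fin p) (Fin p) α) (B : Matrix (Fin q) (Fin q) α) :
    ptB (A ⊗ₖ B) = A ⊗ₖ Bᵀ :=
  rfl

theorem ptB_smul {R : Type*} [SMul R α] (c : R) (A : Matrix (Fin p × Fin q) (Fin p × Fin q) α) :
    ptB (c • A) = c • ptB A :=
  rfl

theorem ptB_sum [AddCommMonoid α] {ι : Type*} (s : Finset ι)
    (A : ι → Matrix (Fin p × Fin q) (Fin p × Fin q) α) :
    ptB (∑ k ∈ s, A k) = ∑ k ∈ s, ptB (A k) := by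
  ext x y
  simp only [ptB, Matrix.sum_apply]

end PartialTranspose

theorem stmt9_general (p q m : ℕ) (ρ : Matrix (Fin p × Fin q) (Fin p × Fin q) ℂ)
    (w : Fin m → ℝ) (σ : Fin m → Matrix (Fin p) (Fin p) ℂ)
    (τ : Fin m → Matrix (Fin q) (Fin q) ℂ)
    (hw : ∀ k, 0 ≤ w k)
    (hσ : ∀ k, IsDensityMatrix (σ k)) (hτ : ∀ k, IsDensityMatrix (τ k))
    (hρ : ρ = ∑ k, (w k : ℂ) • (σ k ⊗ₖ τ k)) :
    ptB ρ = (∑ k, (w k : ℂ) • (σ k ⊗ₖ (τ k)ᵀ)) ∧ (ptB ρ).PosSemidef := by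
  have hpt : ptB ρ = ∑ k, (w k : ℂ) • (σ k ⊗ₖ (τ k)ᵀ) := by
    simp only [hρ, ptB_sum, ptB_smul, ptB_kronecker]
  refine ⟨hpt, hpt ▸ posSemidef_sum _ fun k _ => ?_⟩
  exact ((hσ k).1.kronecker (hτ k).1.transpose).smul (Complex.zero_le_real.mpr (hw k))

theorem stmt9 (p q m : ℕ) (ρ : Matrix (Fin p × Fin q) (Fin p × Fin q) ℂ)
    (w : Fin m → ℝ) (σ : Fin m → Matrix (Fin p) (Fin p) ℂ)
    (τ : Fin m → Matrix (Fin q) (Fin q) ℂ)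
    (hw : ∀ k, 0 ≤ w k) (hw1 : ∑ k, w k = 1)
    (hσ : ∀ k, IsDensityMatrix (σ k)) (hτ : ∀ k, IsDensityMatrix (τ k))
    (hρ : ρ = ∑ k, (w k : ℂ) • (σ k ⊗ₖ τ k)) :
    ptB ρ = (∑ k, (w k : ℂ) • (σ k ⊗ₖ (τ k)ᵀ)) ∧ (ptB ρ).PosSemidef :=
  stmt9_general p q m ρ w σ τ hw hσ hτ hρ
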